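/- Fix d, n ∈ ℕ and ν ∈ (0,1) with n ≤ log₂((1−ν)/ν · 1/2) + 1 suitably bounded, and set ξ = ν / (2ν + (1−ν)·2^{−n+2}). Let X ∈ {±1}^d. Define Z ∼ BSC_{1/2−ξ}(X), i.e., each Z_i equals X_i with probability 1/2+ξ independently. Define (X̃₁,…,X̃_n) from Z by: independently for each coordinate i, with probability ν + (1−ν)2^{−n+1} set X̃_{1,i}=⋯=X̃_{n,i}=Z_i, and otherwise draw (X̃_{1,i},…,X̃_{n,i}) uniformly from {±1}^n ∖ {all-equal vectors}. Let S ⊆ [d] include each coordinate independently with probability ν, set X_i for i ∈ S fixed and X_i uniform otherwise as a parameter, and let X₁,…,X_n be i.i.d. samples that agree with X on S and are uniform off S. Then the joint distribution of (X, X̃_{1:n}) equals the joint distribution of (X, X_{1:n}) when S and X are drawn as described. -/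
import Mathlib


open scoped BigOperators

/-- Per-coordinate joint pmf of `(X_i, (X̃_{1,i},…,X̃_{n,i}))` in the constructed process:
`Z_i` equals `X_i` with probability `1/2+ξ`; then with probability `w = ν + (1−ν)2^{−n+1}`
all `X̃_{k,i}` are set to `Z_i`, otherwise `(X̃_{k,i})_k` is uniform over the non-constant
vectors of `{±1}^n`. -/
noncomputable def qConstructed (n : ℕ) (ν ξ : ℝ) : Bool × (Fin n → Bool) → ℝ :=
  fun xv =>
    (1 / 2) *
      ((1 / 2 + ξ) *
          ((ν + (1 - ν) * (2:ℝ) ^ (-(n:ℤ) + 1)) * (if ∀ k, xv.2 k = xv.1 then (1:ℝ) else 0)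
            + (1 - (ν + (1 - ν) * (2:ℝ) ^ (-(n:ℤ) + 1))) *
                (if ∃ k k', xv.2 k ≠ xv.2 k' then (1:ℝ) / ((2:ℝ) ^ n - 2) else 0))
        + (1 / 2 - ξ) *
          ((ν + (1 - ν) * (2:ℝ) ^ (-(n:ℤ) + 1)) * (if ∀ k, xv.2 k = !xv.1 then (1:ℝ) else 0)
            + (1 - (ν + (1 - ν) * (2:ℝ) ^ (-(n:ℤ) + 1))) *
                (if ∃ k k', xv.2 k ≠ xv.2 k' then (1:ℝ) / ((2:ℝ) ^ n - 2) else 0)))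

/-- Per-coordinate joint pmf of `(X_i, (X_{1,i},…,X_{n,i}))` in the sparse Boolean model:
with probability `ν` the coordinate is in `S` (then `X_i` is a uniform bit and all samples
agree with it), otherwise `X_i` and all samples are independent uniform bits. -/
noncomputable def qModel (n : ℕ) (ν : ℝ) : Bool × (Fin n → Bool) → ℝ :=
  fun xv =>
    ν * (1 / 2) * (if ∀ k, xv.2 k = xv.1 then (1:ℝ) else 0)
      + (1 - ν) * (1 / 2) * (1 / 2) ^ n

lemma qkey (n : ℕ) (hn : 1 ≤ n) (ν : ℝ) (hν : ν ∈ Set.Ioo (0:ℝ) 1)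
    (b : Bool) (v : Fin n → Bool) :
    (1 / 2) *
      ((1 / 2 + ν / (2 * ν + (1 - ν) * (2:ℝ) ^ (-(n:ℤ) + 2))) *
          ((ν + (1 - ν) * (2:ℝ) ^ (-(n:ℤ) + 1)) * (if ∀ k, v k = b then (1:ℝ) else 0)
            + (1 - (ν + (1 - ν) * (2:ℝ) ^ (-(n:ℤ) + 1))) *
                (if ∃ k k', v k ≠ v k' then (1:ℝ) / ((2:ℝ) ^ n - 2) else 0))
        + (1 / 2 - ν / (2 * ν + (1 - ν) * (2:ℝ) ^ (-(n:ℤ) + 2))) *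
          ((ν + (1 - ν) * (2:ℝ) ^ (-(n:ℤ) + 1)) * (if ∀ k, v k = !b then (1:ℝ) else 0)
            + (1 - (ν + (1 - ν) * (2:ℝ) ^ (-(n:ℤ) + 1))) *
                (if ∃ k k', v k ≠ v k' then (1:ℝ) / ((2:ℝ) ^ n - 2) else 0)))
      = ν * (1 / 2) * (if ∀ k, v k = b then (1:ℝ) else 0)
          + (1 - ν) * (1 / 2) * (1 / 2) ^ n := by
  obtain ⟨hν0, hν1⟩ := hν
  have ha0 : (0:ℝ) < 2 ^ n := by positivity
  have e1 : (2:ℝ) ^ (-(n:ℤ) + 1) = 2 / 2 ^ n := by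
    rw [zpow_add₀ (by norm_num : (2:ℝ) ≠ 0), zpow_neg, zpow_natCast]
    field_simp
  have e2 : (2:ℝ) ^ (-(n:ℤ) + 2) = 4 / 2 ^ n := by
    rw [zpow_add₀ (by norm_num : (2:ℝ) ≠ 0), zpow_neg, zpow_natCast]
    norm_num
    field_simp
  have e3 : ((1:ℝ) / 2) ^ n = 1 / 2 ^ n := by rw [div_pow, one_pow]
  have h1ν : (0:ℝ) < 1 - ν := by linarith
  have hD : 2 * ν + (1 - ν) * (4 / 2 ^ n) > 0 := by
    have : (0:ℝ) < (1 - ν) * (4 / 2 ^ n) := by positivity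
    linarith
  rw [e1, e2, e3]
  have k0 : Fin n := ⟨0, hn⟩
  by_cases h1 : ∀ k, v k = b
  · have h2 : ¬ ∀ k, v k = !b := by
      intro h2; have := (h1 k0).symm.trans (h2 k0); simp at this
    have h3 : ¬ ∃ k k', v k ≠ v k' := by
      push_neg; intro k k'; rw [h1 k, h1 k']
    rw [if_pos h1, if_neg h2, if_neg h3]
    field_simp
    ring
  · rw [if_neg h1]
    by_cases h2 : ∀ k, v k = !b
    · have h3 : ¬ ∃ k k', v k ≠ v k' := by
        push_neg; intro k k'; rw [h2 k, h2 k']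
      rw [if_pos h2, if_neg h3]
      field_simp
      ring
    · have h3 : ∃ k k', v k ≠ v k' := by
        push_neg at h1 h2
        obtain ⟨k1, hk1⟩ := h1
        obtain ⟨k2, hk2⟩ := h2
        refine ⟨k1, k2, ?_⟩
        intro h
        rcases Bool.eq_not_iff.mpr hk2 with h2'
        cases b <;> cases hb1 : v k1 <;> cases hb2 : v k2 <;>
          simp_all
      rw [if_neg h2, if_pos h3]
      -- here n ≥ 2 since v is nonconstant
      have hn2 : 2 ≤ n := by
        by_contra hle
        interval_cases n
        obtain ⟨k, k', hk⟩ := h3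
        exact hk (congrArg v (Subsingleton.elim k k'))
      have h2n : (2:ℝ) ^ n - 2 > 0 := by
        have : (2:ℝ) ^ 2 ≤ 2 ^ n := pow_le_pow_right₀ (by norm_num) hn2
        norm_num at this; linarith
      field_simp
      ring


/-- With `ξ = ν / (2ν + (1−ν)·2^{−n+2})`, the joint distribution of the test point `X` and
the post-processed samples `(X̃₁,…,X̃_n)` equals the joint distribution of `X` and genuine
i.i.d. samples `(X₁,…,X_n)` from the sparse Boolean model (a per-coordinate product
identity over all `d` coordinates). -/
theorem sparse_boolean_postprocess_identity (d n : ℕ) (hn : 1 ≤ n) (ν : ℝ)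
    (hν : ν ∈ Set.Ioo (0:ℝ) 1) :
    ∀ (x : Fin d → Bool) (s : Fin n → Fin d → Bool),
      (∏ i, qConstructed n ν (ν / (2 * ν + (1 - ν) * (2:ℝ) ^ (-(n:ℤ) + 2)))
          (x i, fun k => s k i))
        = ∏ i, qModel n ν (x i, fun k => s k i) := by
  intro x s
  refine Finset.prod_congr rfl fun i _ => ?_
  simp only [qConstructed, qModel]
  exact qkey n hn ν hν (x i) (fun k => s k i)
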